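/- Let X be path connected and H a normal subgroup of π₁(X,x₀). The fiber p_H⁻¹(x₀) = π₁(X,x₀)/H with the subspace lasso topology is Hausdorff if and only if H is closed in π₁^{l}(X,x₀). -/

import Mathlib

open CategoryTheory unitInterval
open scoped Topology

attribute [local instance] Path.Homotopic.setoid

noncomputable section

/-- The homotopy class of a loop as an element of the fundamental group. -/
def loopClass {X : Type*} [TopologicalSpace X] {x : X} (γ : Path x x) :
    FundamentalGroup X x :=
  FundamentalGroup.fromPath (⟦γ⟧ : Path.Homotopic.Quotient x x)

variable {X : Type*} [TopologicalSpace X]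

/-- The Spanier group of a family of subsets of `X`, based at `x`: the subgroup generated by
classes `[α∗β∗α⁻¹]` where `α` is a path from `x` and `β` is a loop inside a member of `𝒰`. -/
def spanierGroupAt (x : X) (𝒰 : Set (Set X)) : Subgroup (FundamentalGroup X x) :=
  Subgroup.closure {g | ∃ (y : X) (α : Path x y) (β : Path y y) (U : Set X),
    U ∈ 𝒰 ∧ (∀ t, β t ∈ U) ∧ g = loopClass (α.trans (β.trans α.symm))}

/-- `𝒰` is an open cover of `X`. -/
def IsOpenCover (𝒰 : Set (Set X)) : Prop := (∀ U ∈ 𝒰, IsOpen U) ∧ ⋃₀ 𝒰 = Set.univ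

/-- `X` is a strong `H`-SLT space at `x₀`: for every `x ∈ X` and every open neighborhood `U`
of `x₀` there is an open neighborhood `V` of `x` such that for every loop `β` in `V` based at
`x` and every path `α` from `x₀` to `x` there is a loop `λ` in `U` based at `x₀` with
`[α∗β∗α⁻¹∗λ⁻¹] ∈ H`. -/
def StrongHSLTAt (x₀ : X) (H : Subgroup (FundamentalGroup X x₀)) : Prop :=
  ∀ (x : X) (U : Set X), IsOpen U → x₀ ∈ U →
    ∃ V : Set X, IsOpen V ∧ x ∈ V ∧
      ∀ (β : Path x x), (∀ t, β t ∈ V) → ∀ (α : Path x₀ x),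
        ∃ lam : Path x₀ x₀, (∀ t, lam t ∈ U) ∧
          loopClass (α.trans (β.trans α.symm)) * (loopClass lam)⁻¹ ∈ H

/-- The whisker topology on the fundamental group at `x₀`: the subspace topology inherited
from the whisker topology on the universal path space. -/
def whiskerPi1 (x₀ : X) : TopologicalSpace (FundamentalGroup X x₀) :=
  TopologicalSpace.generateFrom
    {S | ∃ (x : X) (α : Path x₀ x) (U : Set X), IsOpen U ∧ x ∈ U ∧
      S = {g | ∃ lam : Path x x₀, (∀ t, lam t ∈ U) ∧ g = loopClass (α.trans lam)}}

/-- The lasso topology on the fundamental group at `x₀`: the subspace topology inherited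
from the lasso topology on the universal path space. -/
def lassoPi1 (x₀ : X) : TopologicalSpace (FundamentalGroup X x₀) :=
  TopologicalSpace.generateFrom
    {S | ∃ (x : X) (α : Path x₀ x) (𝒰 : Set (Set X)) (U : Set X),
      IsOpenCover 𝒰 ∧ U ∈ 𝒰 ∧ x ∈ U ∧
      S = {g | ∃ (γ : Path x x) (δ : Path x x₀), loopClass γ ∈ spanierGroupAt x 𝒰 ∧
            (∀ t, δ t ∈ U) ∧ g = loopClass ((α.trans γ).trans δ)}}

/-- The relation on paths from `x₀`: `α ∼ β` iff they share the endpoint and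
`[α∗β⁻¹] ∈ K`. -/
def hrel {x₀ : X} (K : Subgroup (FundamentalGroup X x₀)) :
    (Σ y : X, Path x₀ y) → (Σ y : X, Path x₀ y) → Prop :=
  fun a b => ∃ h : a.1 = b.1, loopClass (a.2.trans ((b.2.cast rfl h).symm)) ∈ K

/-- The set `X̃_K` of `K`-classes of paths emanating from `x₀`. -/
def Xtilde (x₀ : X) (K : Subgroup (FundamentalGroup X x₀)) := Quot (hrel K)

/-- The whisker topology on `X̃_K`, with basic open sets `B_K([α], U)`. -/
def whiskerTop (x₀ : X) (K : Subgroup (FundamentalGroup X x₀)) :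
    TopologicalSpace (Xtilde x₀ K) :=
  TopologicalSpace.generateFrom
    {S | ∃ (y : X) (α : Path x₀ y) (U : Set X), IsOpen U ∧ y ∈ U ∧
      S = {q | ∃ (z : X) (lam : Path y z), (∀ t, lam t ∈ U) ∧
            q = Quot.mk _ ⟨z, α.trans lam⟩}}

/-- The lasso topology on `X̃_K`, with basic open sets `B_K([α], 𝒰, U)`. -/
def lassoTop (x₀ : X) (K : Subgroup (FundamentalGroup X x₀)) :
    TopologicalSpace (Xtilde x₀ K) :=
  TopologicalSpace.generateFrom
    {S | ∃ (y : X) (α : Path x₀ y) (𝒰 : Set (Set X)) (U : Set X),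
      IsOpenCover 𝒰 ∧ U ∈ 𝒰 ∧ y ∈ U ∧
      S = {q | ∃ (γ : Path y y) (z : X) (δ : Path y z),
            loopClass γ ∈ spanierGroupAt y 𝒰 ∧ (∀ t, δ t ∈ U) ∧
            q = Quot.mk _ ⟨z, (α.trans γ).trans δ⟩}}

/-- The endpoint projection `p_K : X̃_K → X`, `[α]_K ↦ α(1)`. -/
def endpointMap (x₀ : X) (K : Subgroup (FundamentalGroup X x₀)) : Xtilde x₀ K → X :=
  Quot.lift Sigma.fst (fun _ _ h => h.1)

/-
Sending `g ∈ π₁(X, x₀)` to `[γ]_H` for a loop `γ` representing `g` is a quotient map `q` from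
`π₁^l(X, x₀)` onto the fiber, identifying `a` and `b` exactly when `aH = bH`. A set `O` is open
in `π₁^l` iff each `g ∈ O` has `N * g ⊆ O` for the Spanier group `N` of some open cover; these
groups are normal and directed. If the fiber is Hausdorff, its points are closed and so is
`H = q⁻¹ {q 1}`. If `H` is closed and `a⁻¹ * b ∉ H`, some such `N` has `N * (a⁻¹ * b)` disjoint
from `H`; then `q (N * a)` and `q (N * b)` are open, and disjoint because `a⁻¹ N a = N`.
-/

open Filter Topology

attribute [local instance] lassoPi1 lassoTop

-- Through `pathHom`, identities between loop classes become groupoid identities `simp` decides.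
def pathHom {x y : X} (p : Path x y) : FundamentalGroupoid.mk x ⟶ FundamentalGroupoid.mk y :=
  FundamentalGroupoid.fromPath (Path.Homotopic.Quotient.mk p)

theorem loopClass_eq_pathHom {x : X} (γ : Path x x) : loopClass γ = pathHom γ := rfl

@[simp]
theorem pathHom_trans {x y z : X} (p : Path x y) (q : Path y z) :
    pathHom (p.trans q) = pathHom p ≫ pathHom q := rfl

@[simp]
theorem pathHom_symm {x y : X} (p : Path x y) : pathHom p.symm = inv (pathHom p) :=
  Groupoid.inv_eq_inv (pathHom p)

@[simp]
theorem pathHom_refl (x : X) : pathHom (Path.refl x) = 𝟙 _ := rfl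

theorem FundamentalGroup.inv_eq_inv {x : X} (g : FundamentalGroup X x) :
    g⁻¹ = inv (show FundamentalGroupoid.mk x ⟶ _ from g) :=
  Groupoid.inv_eq_inv _

theorem loopClass_surjective {x : X} : Function.Surjective (loopClass : Path x x → _) :=
  Path.Homotopic.Quotient.mk_surjective

theorem loopClass_trans {x : X} (p q : Path x x) :
    loopClass (p.trans q) = loopClass q * loopClass p := rfl

theorem loopClass_trans_symm {x : X} (p q : Path x x) :
    loopClass (p.trans q.symm) = (loopClass q)⁻¹ * loopClass p := by
  simp [loopClass_eq_pathHom, FundamentalGroup.inv_eq_inv]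

theorem fundamentalGroupMulEquivOfPath_symm_loopClass {x y : X} (δ : Path x y) (γ : Path y y) :
    FundamentalGroup.fundamentalGroupMulEquivOfPath δ.symm (loopClass γ) =
      loopClass (δ.trans (γ.trans δ.symm)) := by
  change Groupoid.inv (pathHom δ.symm) ≫ pathHom γ ≫ pathHom δ.symm = _
  simp [Groupoid.inv_eq_inv, loopClass_eq_pathHom]

theorem loopClass_mem_spanierGroupAt {x : X} {𝒰 : Set (Set X)} {U : Set X} (hU : U ∈ 𝒰)
    {γ : Path x x} (hγ : ∀ t, γ t ∈ U) : loopClass γ ∈ spanierGroupAt x 𝒰 :=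
  Subgroup.subset_closure ⟨x, Path.refl x, γ, U, hU, hγ, by
    simp [loopClass_eq_pathHom]⟩

theorem spanierGroupAt_map_le {x y : X} (δ : Path x y) (𝒰 : Set (Set X)) :
    (spanierGroupAt y 𝒰).map
        (FundamentalGroup.fundamentalGroupMulEquivOfPath δ.symm).toMonoidHom ≤
      spanierGroupAt x 𝒰 := by
  rw [spanierGroupAt, MonoidHom.map_closure, Subgroup.closure_le]
  rintro _ ⟨_, ⟨z, α, β, U, hU, hβ, rfl⟩, rfl⟩
  refine Subgroup.subset_closure ⟨z, δ.trans α, β, U, hU, hβ, ?_⟩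
  rw [MulEquiv.coe_toMonoidHom, fundamentalGroupMulEquivOfPath_symm_loopClass]
  simp [loopClass_eq_pathHom]

theorem loopClass_conj_mem_spanierGroupAt {x y : X} (δ : Path x y) {𝒰 : Set (Set X)}
    {γ : Path y y} (hγ : loopClass γ ∈ spanierGroupAt y 𝒰) :
    loopClass (δ.trans (γ.trans δ.symm)) ∈ spanierGroupAt x 𝒰 := by
  rw [← fundamentalGroupMulEquivOfPath_symm_loopClass]
  exact spanierGroupAt_map_le δ 𝒰 ⟨_, hγ, rfl⟩

instance spanierGroupAt_normal (x : X) (𝒰 : Set (Set X)) : (spanierGroupAt x 𝒰).Normal where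
  conj_mem n hn g := by
    obtain ⟨γ, rfl⟩ := loopClass_surjective g
    obtain ⟨ν, rfl⟩ := loopClass_surjective n
    convert loopClass_conj_mem_spanierGroupAt γ.symm hn using 1
    simp [loopClass_eq_pathHom, FundamentalGroup.inv_eq_inv]

theorem spanierGroupAt_mono {x : X} {𝒰 𝒱 : Set (Set X)} (h : ∀ U ∈ 𝒰, ∃ V ∈ 𝒱, U ⊆ V) :
    spanierGroupAt x 𝒰 ≤ spanierGroupAt x 𝒱 := by
  rw [spanierGroupAt, Subgroup.closure_le]
  rintro _ ⟨z, α, β, U, hU, hβ, rfl⟩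
  obtain ⟨V, hV, hUV⟩ := h U hU
  exact Subgroup.subset_closure ⟨z, α, β, V, hV, fun t => hUV (hβ t), rfl⟩

theorem IsOpenCover.exists_mem {𝒰 : Set (Set X)} (h : IsOpenCover 𝒰) (x : X) :
    ∃ U ∈ 𝒰, x ∈ U :=
  Set.mem_sUnion.1 (h.2 ▸ Set.mem_univ x)

theorem isOpenCover_singleton_univ : IsOpenCover ({Set.univ} : Set (Set X)) :=
  ⟨fun _ hU => hU ▸ isOpen_univ, Set.sUnion_singleton _⟩

theorem IsOpenCover.image2_inter {𝒰 𝒱 : Set (Set X)} (h𝒰 : IsOpenCover 𝒰)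
    (h𝒱 : IsOpenCover 𝒱) : IsOpenCover (Set.image2 (· ∩ ·) 𝒰 𝒱) := by
  refine ⟨?_, Set.eq_univ_of_forall fun x => ?_⟩
  · rintro _ ⟨U, hU, V, hV, rfl⟩
    exact (h𝒰.1 U hU).inter (h𝒱.1 V hV)
  · obtain ⟨U, hU, hxU⟩ := h𝒰.exists_mem x
    obtain ⟨V, hV, hxV⟩ := h𝒱.exists_mem x
    exact ⟨U ∩ V, Set.mem_image2_of_mem hU hV, hxU, hxV⟩

def spanierFilter (x₀ : X) : Filter (FundamentalGroup X x₀) :=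
  ⨅ (𝒰 : Set (Set X)) (_ : IsOpenCover 𝒰), 𝓟 (spanierGroupAt x₀ 𝒰)

theorem hasBasis_spanierFilter (x₀ : X) :
    (spanierFilter x₀).HasBasis IsOpenCover fun 𝒰 => (spanierGroupAt x₀ 𝒰 : Set _) := by
  refine hasBasis_biInf_principal' (fun 𝒰 h𝒰 𝒱 h𝒱 => ?_) ⟨_, isOpenCover_singleton_univ⟩
  refine ⟨_, h𝒰.image2_inter h𝒱, spanierGroupAt_mono ?_, spanierGroupAt_mono ?_⟩
  · rintro _ ⟨U, hU, V, -, rfl⟩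
    exact ⟨U, hU, Set.inter_subset_left⟩
  · rintro _ ⟨U, -, V, hV, rfl⟩
    exact ⟨V, hV, Set.inter_subset_right⟩

theorem eventually_mul_mem_of_isOpen {x₀ : X} {O : Set (FundamentalGroup X x₀)} (hO : IsOpen O)
    {g : FundamentalGroup X x₀} (hg : g ∈ O) : ∀ᶠ c in spanierFilter x₀, c * g ∈ O := by
  induction hO generalizing g with
  | basic S hS =>
    obtain ⟨x, α, 𝒰, U, h𝒰, -, -, rfl⟩ := hS
    obtain ⟨γ, δ, hγ, hδ, rfl⟩ := hg
    refine (hasBasis_spanierFilter x₀).eventually_iff.2 ⟨𝒰, h𝒰, fun c hc => ?_⟩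
    obtain ⟨ν, rfl⟩ := loopClass_surjective c
    refine ⟨γ.trans (δ.trans (ν.trans δ.symm)), δ, ?_, hδ, ?_⟩
    · rw [loopClass_trans]
      exact mul_mem (loopClass_conj_mem_spanierGroupAt δ hc) hγ
    · simp [loopClass_eq_pathHom]
  | univ => exact .of_forall fun _ => trivial
  | inter O₁ O₂ _ _ ih₁ ih₂ => exact (ih₁ hg.1).and (ih₂ hg.2)
  | sUnion 𝒪 _ ih =>
    obtain ⟨O, hO, hgO⟩ := hg
    exact (ih O hO hgO).mono fun c hc => ⟨O, hO, hc⟩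

theorem isOpen_lassoPi1_iff {x₀ : X} {O : Set (FundamentalGroup X x₀)} :
    IsOpen O ↔ ∀ g ∈ O, ∀ᶠ c in spanierFilter x₀, c * g ∈ O := by
  refine ⟨fun hO g hg => eventually_mul_mem_of_isOpen hO hg, fun h => ?_⟩
  refine isOpen_iff_forall_mem_open.2 fun g hg => ?_
  obtain ⟨𝒰, h𝒰, hO⟩ := (hasBasis_spanierFilter x₀).eventually_iff.1 (h g hg)
  obtain ⟨U, hU, hx₀U⟩ := h𝒰.exists_mem x₀
  obtain ⟨p, rfl⟩ := loopClass_surjective g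
  refine ⟨_, ?_, TopologicalSpace.isOpen_generateFrom_of_mem ⟨x₀, p, 𝒰, U, h𝒰, hU, hx₀U, rfl⟩,
    Path.refl x₀, Path.refl x₀, one_mem _, fun _ => hx₀U, by simp [loopClass_eq_pathHom]⟩
  rintro _ ⟨γ, δ, hγ, hδ, rfl⟩
  rw [loopClass_trans, loopClass_trans, ← mul_assoc]
  exact hO (mul_mem (loopClass_mem_spanierGroupAt hU hδ) hγ)

section Fiber

variable {x₀ : X}

theorem hrel_mk_iff {K : Subgroup (FundamentalGroup X x₀)} {y : X} {p q : Path x₀ y} :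
    hrel K ⟨y, p⟩ ⟨y, q⟩ ↔ loopClass (p.trans q.symm) ∈ K :=
  ⟨fun ⟨_, h⟩ => h, fun h => ⟨rfl, h⟩⟩

theorem hrel_equivalence (K : Subgroup (FundamentalGroup X x₀)) : Equivalence (hrel K) where
  refl := fun ⟨_, p⟩ => hrel_mk_iff.2 <| by
    simpa [loopClass_eq_pathHom] using one_mem K
  symm := by
    rintro ⟨y, p⟩ ⟨z, q⟩ ⟨hyz, h⟩
    obtain rfl : y = z := hyz
    refine hrel_mk_iff.2 ?_
    convert inv_mem h using 1
    simp [loopClass_eq_pathHom, FundamentalGroup.inv_eq_inv]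
  trans := by
    rintro ⟨y, p⟩ ⟨z, q⟩ ⟨w, r⟩ ⟨hyz, hpq⟩ ⟨hzw, hqr⟩
    obtain rfl : y = z := hyz
    obtain rfl : y = w := hzw
    refine hrel_mk_iff.2 ?_
    convert mul_mem hqr hpq using 1
    simp [loopClass_eq_pathHom]

abbrev baseFiber (x₀ : X) (K : Subgroup (FundamentalGroup X x₀)) : Type _ :=
  {q : Xtilde x₀ K // endpointMap x₀ K q = x₀}

def fiberMk (K : Subgroup (FundamentalGroup X x₀)) (g : FundamentalGroup X x₀) :
    baseFiber x₀ K :=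
  Quotient.lift (fun γ : Path x₀ x₀ => (⟨Quot.mk _ ⟨x₀, γ⟩, rfl⟩ : baseFiber x₀ K))
    (fun p q hpq => Subtype.ext <| Quot.sound <| hrel_mk_iff.2 <| by
      rw [loopClass_trans_symm, show loopClass p = loopClass q from Quotient.sound hpq,
        inv_mul_cancel]
      exact one_mem K)
    (g : Path.Homotopic.Quotient x₀ x₀)

variable {K : Subgroup (FundamentalGroup X x₀)}

theorem fiberMk_loopClass (γ : Path x₀ x₀) :
    fiberMk K (loopClass γ) = ⟨Quot.mk _ ⟨x₀, γ⟩, rfl⟩ := rfl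

theorem fiberMk_surjective : Function.Surjective (fiberMk K) := by
  rintro ⟨q, hq⟩
  induction q using Quot.ind with | mk a => ?_
  obtain ⟨y, γ⟩ := a
  obtain rfl : y = x₀ := hq
  exact ⟨loopClass γ, rfl⟩

theorem fiberMk_eq_fiberMk_iff {g h : FundamentalGroup X x₀} :
    fiberMk K g = fiberMk K h ↔ g⁻¹ * h ∈ K := by
  obtain ⟨p, rfl⟩ := loopClass_surjective g
  obtain ⟨q, rfl⟩ := loopClass_surjective h
  rw [fiberMk_loopClass, fiberMk_loopClass, Subtype.ext_iff]
  change Quot.mk _ _ = Quot.mk _ _ ↔ _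
  rw [(hrel_equivalence K).quot_mk_eq_iff, hrel_mk_iff, loopClass_trans_symm, ← inv_mem_iff,
    mul_inv_rev, inv_inv]

theorem fiberMk_eq_fiberMk_one_iff {g : FundamentalGroup X x₀} :
    fiberMk K g = fiberMk K 1 ↔ g ∈ K := by
  rw [fiberMk_eq_fiberMk_iff, mul_one, inv_mem_iff]

theorem continuous_fiberMk : Continuous (fiberMk K) := by
  refine continuous_induced_rng.2 (continuous_generateFrom_iff.2 ?_)
  rintro _ ⟨y, α, 𝒰, U, h𝒰, -, -, rfl⟩
  refine isOpen_lassoPi1_iff.2 fun g hg => ?_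
  obtain ⟨p, rfl⟩ := loopClass_surjective g
  obtain ⟨γ, z, δ, hγ, hδ, hp⟩ := hg
  obtain ⟨rfl : x₀ = z, hp⟩ := ((hrel_equivalence K).quot_mk_eq_iff _ _).1 hp
  refine (hasBasis_spanierFilter x₀).eventually_iff.2 ⟨𝒰, h𝒰, fun c hc => ?_⟩
  obtain ⟨ν, rfl⟩ := loopClass_surjective c
  refine ⟨γ.trans (δ.trans (ν.trans δ.symm)), x₀, δ,
    mul_mem (loopClass_conj_mem_spanierGroupAt δ hc) hγ, hδ, Quot.sound (hrel_mk_iff.2 ?_)⟩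
  convert hp using 1
  simp [loopClass_eq_pathHom]

theorem isQuotientMap_fiberMk : IsQuotientMap (fiberMk K) := by
  refine ⟨isCoinducing_iff.2 fun T => ⟨fun hT => isOpen_iff_forall_mem_open.2 fun t ht => ?_,
    fun hT => hT.preimage continuous_fiberMk⟩, fiberMk_surjective⟩
  obtain ⟨g, rfl⟩ := fiberMk_surjective t
  obtain ⟨𝒰, h𝒰, hT⟩ :=
    (hasBasis_spanierFilter x₀).eventually_iff.1 (isOpen_lassoPi1_iff.1 hT g ht)
  obtain ⟨U, hU, hx₀U⟩ := h𝒰.exists_mem x₀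
  obtain ⟨p, rfl⟩ := loopClass_surjective g
  refine ⟨Subtype.val ⁻¹' _, ?_, isOpen_induced (TopologicalSpace.isOpen_generateFrom_of_mem
    ⟨x₀, p, 𝒰, U, h𝒰, hU, hx₀U, rfl⟩), Path.refl x₀, x₀, Path.refl x₀, one_mem _,
    fun _ => hx₀U, Quot.sound (hrel_mk_iff.2 (by simpa [loopClass_eq_pathHom] using one_mem K))⟩
  rintro ⟨_, hq⟩ ⟨γ, z, δ, hγ, hδ, rfl⟩
  obtain rfl : z = x₀ := hq
  have := hT (mul_mem (loopClass_mem_spanierGroupAt hU hδ) hγ)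
  rwa [mul_assoc, ← loopClass_trans, ← loopClass_trans] at this

theorem isOpen_image_fiberMk_mul {𝒰 : Set (Set X)} (h𝒰 : IsOpenCover 𝒰)
    (a : FundamentalGroup X x₀) :
    IsOpen ((fun c => fiberMk K (c * a)) '' (spanierGroupAt x₀ 𝒰 : Set _)) := by
  rw [← isQuotientMap_fiberMk.isOpen_preimage, isOpen_lassoPi1_iff]
  rintro g ⟨c, hc, hcg⟩
  refine (hasBasis_spanierFilter x₀).eventually_iff.2
    ⟨𝒰, h𝒰, fun n hn => ⟨n * c, mul_mem hn hc, ?_⟩⟩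
  rw [fiberMk_eq_fiberMk_iff] at hcg ⊢
  convert hcg using 1
  group

theorem t2Space_baseFiber_of_isClosed (hK : IsClosed (K : Set (FundamentalGroup X x₀))) :
    T2Space (baseFiber x₀ K) := by
  refine ⟨fun s t hst => ?_⟩
  obtain ⟨a, rfl⟩ := fiberMk_surjective s
  obtain ⟨b, rfl⟩ := fiberMk_surjective t
  have hab : a⁻¹ * b ∉ K := mt fiberMk_eq_fiberMk_iff.2 hst
  obtain ⟨𝒰, h𝒰, hK⟩ := (hasBasis_spanierFilter x₀).eventually_iff.1
    (isOpen_lassoPi1_iff.1 hK.isOpen_compl _ hab)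
  refine ⟨_, _, isOpen_image_fiberMk_mul h𝒰 a, isOpen_image_fiberMk_mul h𝒰 b,
    ⟨1, one_mem _, congrArg _ (one_mul a)⟩, ⟨1, one_mem _, congrArg _ (one_mul b)⟩,
    Set.disjoint_left.2 ?_⟩
  rintro _ ⟨c, hc, rfl⟩ ⟨d, hd, hdc⟩
  have hconj := (spanierGroupAt_normal x₀ 𝒰).conj_mem _ (mul_mem (inv_mem hc) hd) a⁻¹
  refine hK hconj (SetLike.mem_coe.2 ?_)
  convert fiberMk_eq_fiberMk_iff.1 hdc.symm using 1
  group

end Fiber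

theorem lasso_fiber_t2_iff_closed_general
    (x₀ : X) (H : Subgroup (FundamentalGroup X x₀)) :
    @T2Space {q : Xtilde x₀ H // endpointMap x₀ H q = x₀}
        (TopologicalSpace.induced Subtype.val (lassoTop x₀ H)) ↔
      IsClosed[lassoPi1 x₀] (H : Set (FundamentalGroup X x₀)) := by
  refine ⟨fun _ => ?_, t2Space_baseFiber_of_isClosed⟩
  have hH : (H : Set (FundamentalGroup X x₀)) = fiberMk H ⁻¹' {fiberMk H 1} :=
    Set.ext fun _ => fiberMk_eq_fiberMk_one_iff.symm
  exact hH ▸ isClosed_singleton.preimage continuous_fiberMk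

theorem lasso_fiber_t2_iff_closed [PathConnectedSpace X]
    (x₀ : X) (H : Subgroup (FundamentalGroup X x₀)) (hN : H.Normal) :
    @T2Space {q : Xtilde x₀ H // endpointMap x₀ H q = x₀}
        (TopologicalSpace.induced Subtype.val (lassoTop x₀ H)) ↔
      IsClosed[lassoPi1 x₀] (H : Set (FundamentalGroup X x₀)) :=
  lasso_fiber_t2_iff_closed_general x₀ H

end
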